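/- If gcd(r,60) = 1, then for any k ≥ 0 there exists j ∈ {0,1,...,59} such that F_{k+rj} ≡ 0 (mod 10) and F_{k+r(j+1)} ≡ 1 (mod 10). -/
import Mathlib

lemma fib_add60 (n : ℕ) : Nat.fib (n + 60) % 10 = Nat.fib n % 10 := by
  have h := Nat.fib_add n 59
  have e : n + 59 + 1 = n + 60 := by omega
  rw [e] at h
  have h59 : Nat.fib 59 % 10 = 1 := by decide
  have h60 : Nat.fib 60 % 10 = 0 := by decide
  rw [h, Nat.add_mod, Nat.mul_mod, Nat.mul_mod (Nat.fib (n+1)), h59, h60]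
  simp [Nat.mod_mod_of_dvd]

lemma fib_mod60 (n : ℕ) : Nat.fib n % 10 = Nat.fib (n % 60) % 10 := by
  induction n using Nat.strong_induction_on with
  | _ n ih =>
    by_cases hn : n < 60
    · rw [Nat.mod_eq_of_lt hn]
    · have e : n = (n - 60) + 60 := by omega
      have e2 : (n - 60 + 60) % 60 = (n - 60) % 60 := by omega
      rw [e, fib_add60, ih (n - 60) (by omega), e2]

set_option maxRecDepth 10000 in
lemma key : ∀ s < 60, ∀ t < 60, Nat.gcd s 60 = 1 →
    ∃ j < 60, Nat.fib ((t + s * j) % 60) % 10 = 0 ∧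
      Nat.fib ((t + s * (j + 1)) % 60) % 10 = 1 := by decide

theorem zero_followed_by_one (r k : ℕ) (h : Nat.gcd r 60 = 1) :
    ∃ j : ℕ, j ≤ 59 ∧ Nat.fib (k + r * j) % 10 = 0 ∧ Nat.fib (k + r * (j + 1)) % 10 = 1 := by
  have hs : Nat.gcd (r % 60) 60 = 1 := by
    rw [← Nat.gcd_rec, Nat.gcd_comm]; exact h
  obtain ⟨j, hj, h0, h1⟩ := key (r % 60) (Nat.mod_lt _ (by norm_num)) (k % 60)
    (Nat.mod_lt _ (by norm_num)) hs
  have hm : ∀ i, (k + r * i) % 60 = (k % 60 + r % 60 * i) % 60 := by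
    intro i
    conv_lhs => rw [Nat.add_mod, Nat.mul_mod]
    conv_rhs => rw [Nat.add_mod, Nat.mul_mod]
    simp
  refine ⟨j, by omega, ?_, ?_⟩
  · rw [fib_mod60, hm]; exact h0
  · rw [fib_mod60, hm]; exact h1
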